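/- For the linear toy model, if ν ∈ C^{1,2}([0,T)×ℝ) solves ∂_t ν − ν ∂_ξ ν + (σ²(T−t)²/2) ∂²_{ξξ} ν = 0, then the function 𝒱(t,p,e) := ν(t, e + (T−t)·(1/√d)·∑_{ℓ=1}^d p_ℓ) solves the quasilinear PDE ∂_t 𝒱 + ((1/√d)∑_ℓ p_ℓ − 𝒱) ∂_e 𝒱 + (σ²/2) Δ_{pp} 𝒱 = 0 on [0,T) × ℝ^d × ℝ. -/

import Mathlib

/-!
By the chain rule, `∂_t 𝒱 = ∂_t ν - S ∂_ξ ν` and `∂_e 𝒱 = ∂_ξ ν` at `ξ = e + (T - t) S p`,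
while `p ↦ 𝒱 t p e` depends on `p` only through the linear form `(T - t) S p`, whose
coefficient vector has squared length `(T - t)²`; hence `Δ_pp 𝒱 = (T - t)² ∂²_ξξ ν`.
Substituting, the two `S ∂_ξ ν` terms cancel and what is left is the equation for `ν` at `ξ`.
-/

open Function

lemma Finset.sum_update_eq_sub_add_sum {ι M : Type*} [Fintype ι] [DecidableEq ι] [AddCommGroup M]
    (p : ι → M) (ℓ : ι) (x : M) :
    ∑ j, update p ℓ x j = x - p ℓ + ∑ j, p j := by
  rw [Finset.sum_update_of_mem (Finset.mem_univ ℓ), Finset.sdiff_singleton_eq_erase,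
    ← Finset.add_sum_erase _ p (Finset.mem_univ ℓ)]
  abel

lemma iteratedDeriv_comp_affine {f : ℝ → ℝ} {n : ℕ} (hf : ContDiff ℝ n f) (c a x : ℝ) :
    iteratedDeriv n (fun y => f (c + a * y)) x = a ^ n * iteratedDeriv n f (c + a * x) := by
  have hshift : ContDiff ℝ n (fun z => f (c + z)) := hf.comp (contDiff_const.add contDiff_id)
  rw [iteratedDeriv_comp_const_mul hshift, iteratedDeriv_comp_const_add]

lemma sum_iteratedDeriv_two_update_comp_sum {ι : Type*} [Fintype ι] [DecidableEq ι]
    {f : ℝ → ℝ} (hf : ContDiff ℝ 2 f) (c a : ℝ) (p : ι → ℝ) :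
    ∑ ℓ, iteratedDeriv 2 (fun x => f (c + a * ∑ j, update p ℓ x j)) (p ℓ)
      = Fintype.card ι * a ^ 2 * iteratedDeriv 2 f (c + a * ∑ j, p j) := by
  have hline : ∀ ℓ, iteratedDeriv 2 (fun x => f (c + a * ∑ j, update p ℓ x j)) (p ℓ)
      = a ^ 2 * iteratedDeriv 2 f (c + a * ∑ j, p j) := by
    intro ℓ
    simp_rw [Finset.sum_update_eq_sub_add_sum]
    have hrw : (fun x => f (c + a * (x - p ℓ + ∑ j, p j)))
        = fun x => f ((c + a * (∑ j, p j - p ℓ)) + a * x) := by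
      funext x; congr 1; ring
    rw [hrw, iteratedDeriv_comp_affine hf]
    congr 2; ring
  rw [Finset.sum_congr rfl fun ℓ _ => hline ℓ, Finset.sum_const, Finset.card_univ, nsmul_eq_mul,
    mul_assoc]

lemma DifferentiableAt.hasDerivAt_uncurry_comp {F : ℝ → ℝ → ℝ} {g : ℝ → ℝ} {g' t : ℝ}
    (hF : DifferentiableAt ℝ (uncurry F) (t, g t)) (hg : HasDerivAt g g' t) :
    HasDerivAt (fun s => F s (g s))
      (deriv (fun s => F s (g t)) t + g' * deriv (F t) (g t)) t := by
  set L := fderiv ℝ (uncurry F) (t, g t)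
  have hL : HasFDerivAt (uncurry F) L (t, g t) := hF.hasFDerivAt
  have h_time : deriv (fun s => F s (g t)) t = L (1, 0) := by
    exact (hL.comp_hasDerivAt t ((hasDerivAt_id t).prodMk (hasDerivAt_const t (g t)))).deriv
  have h_space : deriv (F t) (g t) = L (0, 1) := by
    exact (hL.comp_hasDerivAt (g t) ((hasDerivAt_const (g t) t).prodMk (hasDerivAt_id (g t)))).deriv
  have hsplit : ((1 : ℝ), g') = ((1 : ℝ), (0 : ℝ)) + g' • ((0 : ℝ), (1 : ℝ)) := by
    simp
  rw [h_time, h_space, ← smul_eq_mul, ← map_smul, ← map_add, ← hsplit]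
  exact hL.comp_hasDerivAt t ((hasDerivAt_id t).prodMk hg)

theorem stmt19_general (T σ : ℝ) (d : ℕ) (hd : 0 < d)
    (ν : ℝ → ℝ → ℝ)
    (hν : ContDiff ℝ 2 (Function.uncurry ν))
    (hpde : ∀ t ∈ Set.Ico (0:ℝ) T, ∀ ξ : ℝ,
      deriv (fun s => ν s ξ) t - ν t ξ * deriv (ν t) ξ
        + σ ^ 2 * (T - t) ^ 2 / 2 * iteratedDeriv 2 (ν t) ξ = 0)
    (S : (Fin d → ℝ) → ℝ) (hS : ∀ p, S p = (1 / Real.sqrt d) * ∑ ℓ : Fin d, p ℓ)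
    (𝒱 : ℝ → (Fin d → ℝ) → ℝ → ℝ)
    (h𝒱 : ∀ t p e, 𝒱 t p e = ν t (e + (T - t) * S p)) :
    ∀ t ∈ Set.Ico (0:ℝ) T, ∀ (p : Fin d → ℝ) (e : ℝ),
      deriv (fun s => 𝒱 s p e) t
        + (S p - 𝒱 t p e) * deriv (fun x => 𝒱 t p x) e
        + σ ^ 2 / 2 * ∑ ℓ : Fin d,
            iteratedDeriv 2 (fun x => 𝒱 t (Function.update p ℓ x) e) (p ℓ) = 0 := by
  intro t ht p e
  set ξ := e + (T - t) * S p with hξ_def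
  have hνt : ContDiff ℝ 2 (ν t) :=
    hν.comp (contDiff_const.prodMk contDiff_id : ContDiff ℝ 2 fun x : ℝ => (t, x))
  have h_time : deriv (fun s => 𝒱 s p e) t = deriv (fun s => ν s ξ) t - S p * deriv (ν t) ξ := by
    have hg : HasDerivAt (fun s => e + (T - s) * S p) (-S p) t := by
      simpa using (((hasDerivAt_id t).const_sub T).mul_const (S p)).const_add e
    have hν_diff : DifferentiableAt ℝ (uncurry ν) (t, ξ) := hν.differentiable (by norm_num) _
    simp_rw [h𝒱]
    rw [(hν_diff.hasDerivAt_uncurry_comp hg).deriv]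
    ring
  have h_space : deriv (fun x => 𝒱 t p x) e = deriv (ν t) ξ := by
    simp_rw [h𝒱]
    exact deriv_comp_add_const (f := ν t) _ _
  have h_laplacian : ∑ ℓ : Fin d, iteratedDeriv 2 (fun x => 𝒱 t (update p ℓ x) e) (p ℓ)
      = (T - t) ^ 2 * iteratedDeriv 2 (ν t) ξ := by
    have hd' : (0 : ℝ) < d := by exact_mod_cast hd
    have hξ : ξ = e + (T - t) * (1 / √d) * ∑ j, p j := by rw [hξ_def, hS, mul_assoc]
    simp_rw [h𝒱, hS, ← mul_assoc]
    rw [sum_iteratedDeriv_two_update_comp_sum hνt, Fintype.card_fin, mul_pow, div_pow, one_pow,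
      Real.sq_sqrt hd'.le, hξ]
    congr 1
    field_simp
  rw [h_time, h_space, h_laplacian, h𝒱]
  linear_combination hpde t ht ξ

/-- change of variables for the linear toy model: if ν solves
∂_t ν − ν ∂_ξ ν + σ²(T−t)²/2 ∂²_{ξξ} ν = 0, then
𝒱(t,p,e) = ν(t, e + (T−t)(1/√d)∑_ℓ p_ℓ) solves
∂_t 𝒱 + ((1/√d)∑_ℓ p_ℓ − 𝒱)∂_e 𝒱 + (σ²/2)Δ_{pp}𝒱 = 0 on [0,T) × ℝ^d × ℝ. -/
theorem stmt19 (T σ : ℝ) (hT : 0 < T) (hσ : 0 < σ) (d : ℕ) (hd : 0 < d)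
    (ν : ℝ → ℝ → ℝ)
    (hν : ContDiff ℝ 2 (Function.uncurry ν))
    (hpde : ∀ t ∈ Set.Ico (0:ℝ) T, ∀ ξ : ℝ,
      deriv (fun s => ν s ξ) t - ν t ξ * deriv (ν t) ξ
        + σ ^ 2 * (T - t) ^ 2 / 2 * iteratedDeriv 2 (ν t) ξ = 0)
    (S : (Fin d → ℝ) → ℝ) (hS : ∀ p, S p = (1 / Real.sqrt d) * ∑ ℓ : Fin d, p ℓ)
    (𝒱 : ℝ → (Fin d → ℝ) → ℝ → ℝ)
    (h𝒱 : ∀ t p e, 𝒱 t p e = ν t (e + (T - t) * S p)) :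
    ∀ t ∈ Set.Ico (0:ℝ) T, ∀ (p : Fin d → ℝ) (e : ℝ),
      deriv (fun s => 𝒱 s p e) t
        + (S p - 𝒱 t p e) * deriv (fun x => 𝒱 t p x) e
        + σ ^ 2 / 2 * ∑ ℓ : Fin d,
            iteratedDeriv 2 (fun x => 𝒱 t (Function.update p ℓ x) e) (p ℓ) = 0 :=
  stmt19_general T σ d hd ν hν hpde S hS 𝒱 h𝒱
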